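/- Let M be a structure in a finite relational language L such that every atomic relation of M is mutually algebraic (M is finitely MA-presented), and suppose there is a uniform finite bound B on the size of every MA-connected component of M. Then M is cellular: taking K to be the union of all components whose isomorphism type (as an enumerated finite L-structure) occurs only finitely often, and grouping the remaining components by isomorphism type, yields a cellular partition of M. -/

import Mathlib

/-- A cellular partition of the structure `M` (with atomic relations `rel`): a finite set
`K` together with families of tuples `c i j` (`i ∈ [n]`, `j ∈ ℕ`, `c i j` of length
`k i`) partitioning `M`, such that for fixed `i` the tuples `c i j` are pairwise
isomorphic over `K`, and every permutation `σ` of `ℕ` is realized by an automorphism of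
`M` mapping each `c i j` coordinatewise onto `c i (σ j)` and fixing everything outside
the family pointwise. -/
def IsCellularPartition {M L : Type*} (arity : L → ℕ)
    (rel : (r : L) → Set (Fin (arity r) → M))
    (K : Set M) (n : ℕ) (k : Fin n → ℕ)
    (c : (i : Fin n) → ℕ → (Fin (k i) → M)) : Prop :=
  -- `K` is finite
  K.Finite ∧
  -- the pieces cover `M`
  (∀ x : M, x ∈ K ∨ ∃ i j ℓ, c i j ℓ = x) ∧
  -- and are pairwise disjoint
  (∀ i j ℓ, c i j ℓ ∉ K) ∧
  (∀ (i : Fin n) (j : ℕ) (ℓ : Fin (k i)) (i' : Fin n) (j' : ℕ) (ℓ' : Fin (k i')),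
      c i j ℓ = c i' j' ℓ' → i = i' ∧ j = j' ∧ (ℓ : ℕ) = (ℓ' : ℕ)) ∧
  -- for fixed `i`, the tuples `c i j` are pairwise isomorphic over `K`
  (∀ (i : Fin n) (j j' : ℕ), ∃ g : M → M,
     (∀ x ∈ K, g x = x) ∧ (∀ ℓ, g (c i j ℓ) = c i j' ℓ) ∧
     ∀ (r : L) (v : Fin (arity r) → M),
       (∀ p, v p ∈ K ∨ ∃ ℓ, v p = c i j ℓ) → (v ∈ rel r ↔ (g ∘ v) ∈ rel r)) ∧
  -- every permutation of each family is realized by an automorphism fixing the rest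
  (∀ (i : Fin n) (σ : Equiv.Perm ℕ), ∃ f : M → M, Function.Bijective f ∧
     (∀ (r : L) (v : Fin (arity r) → M), v ∈ rel r ↔ (f ∘ v) ∈ rel r) ∧
     (∀ j ℓ, f (c i j ℓ) = c i (σ j) ℓ) ∧
     (∀ x : M, (∀ j ℓ, x ≠ c i j ℓ) → f x = x))

/-- A relation `R ⊆ M^n` is mutually algebraic with constant `K` if every element of `M`
occurs as a coordinate of at most `K` tuples of `R`. -/
def MutAlg {M : Type*} {n : ℕ} (R : Set (Fin n → M)) (K : ℕ) : Prop :=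
  ∀ m : M, {b | b ∈ R ∧ ∃ i, b i = m}.Finite ∧ {b | b ∈ R ∧ ∃ i, b i = m}.ncard ≤ K

/-- `b` is a mate of `a` if some tuple containing both `a` and `b` satisfies some atomic
relation of the structure. -/
def Mate {M L : Type*} (arity : L → ℕ) (rel : (r : L) → Set (Fin (arity r) → M))
    (a b : M) : Prop :=
  ∃ r : L, ∃ d ∈ rel r, (∃ i, d i = a) ∧ (∃ j, d j = b)

/-! Every relation tuple lies inside one MA-connected component and components have at most `B`
elements, so the enumerated components realize only finitely many quantifier-free types. The
components whose type occurs finitely often make up the finite set `K`; those of each type that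
occurs infinitely often are listed as one sequence `c i 0, c i 1, …`. Since relation tuples never
cross components, sending the components of such a sequence coordinatewise onto components of
the same sequence, and fixing everything else, preserves all relations; this yields both the
isomorphisms over `K` and the automorphisms realizing permutations. -/

open Function Set

section Blocks

variable {M L : Type*} {arity : L → ℕ} {rel : (r : L) → Set (Fin (arity r) → M)}
  {n : ℕ} {k : Fin n → ℕ} (c : (i : Fin n) → ℕ → Fin (k i) → M) (i : Fin n)

open Classical in
noncomputable def blockShift (σ : ℕ → ℕ) (x : M) : M :=
  if h : ∃ j ℓ, x = c i j ℓ then c i (σ h.choose) h.choose_spec.choose else x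

variable {c i}

theorem blockShift_apply_of_forall_ne (σ : ℕ → ℕ) {x : M} (hx : ∀ j ℓ, x ≠ c i j ℓ) :
    blockShift c i σ x = x :=
  dif_neg (by simpa using hx)

variable (hinj : ∀ j ℓ j' ℓ', c i j ℓ = c i j' ℓ' → j = j' ∧ ℓ = ℓ')
include hinj

theorem blockShift_apply_block (σ : ℕ → ℕ) (j : ℕ) (ℓ : Fin (k i)) :
    blockShift c i σ (c i j ℓ) = c i (σ j) ℓ := by
  have h : ∃ j' ℓ', c i j ℓ = c i j' ℓ' := ⟨j, ℓ, rfl⟩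
  obtain ⟨hj, hℓ⟩ := hinj _ _ _ _ h.choose_spec.choose_spec
  rw [blockShift, dif_pos h, ← hℓ, ← hj]

theorem blockShift_symm_apply (σ : Equiv.Perm ℕ) (x : M) :
    blockShift c i σ.symm (blockShift c i σ x) = x := by
  by_cases hx : ∃ j ℓ, x = c i j ℓ
  · obtain ⟨j, ℓ, rfl⟩ := hx
    rw [blockShift_apply_block hinj, blockShift_apply_block hinj, σ.symm_apply_apply]
  · push Not at hx
    rw [blockShift_apply_of_forall_ne σ hx, blockShift_apply_of_forall_ne σ.symm hx]

theorem blockShift_bijective (σ : Equiv.Perm ℕ) : Bijective (blockShift c i σ) :=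
  bijective_iff_has_inverse.mpr ⟨blockShift c i σ.symm, blockShift_symm_apply hinj σ,
    fun x => by simpa using blockShift_symm_apply hinj σ.symm x⟩

theorem blockShift_comp_mem_rel_iff
    (hclosed : ∀ r v, v ∈ rel r → ∀ p j ℓ, v p = c i j ℓ → ∃ w, v = c i j ∘ w)
    (hiso : ∀ j j' r (w : Fin (arity r) → Fin (k i)), c i j ∘ w ∈ rel r ↔ c i j' ∘ w ∈ rel r)
    (σ : Equiv.Perm ℕ) (r : L) (v : Fin (arity r) → M) :
    blockShift c i σ ∘ v ∈ rel r ↔ v ∈ rel r := by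
  have preserves : ∀ (τ : Equiv.Perm ℕ) v, v ∈ rel r → blockShift c i τ ∘ v ∈ rel r := by
    intro τ v hv
    by_cases hmeet : ∃ p j ℓ, v p = c i j ℓ
    · obtain ⟨p, j, ℓ, hp⟩ := hmeet
      obtain ⟨w, rfl⟩ := hclosed r v hv p j ℓ hp
      have hshift : blockShift c i τ ∘ c i j ∘ w = c i (τ j) ∘ w :=
        funext fun _ => blockShift_apply_block hinj τ j _
      rwa [hshift, ← hiso]
    · push Not at hmeet
      have hfix : blockShift c i τ ∘ v = v :=
        funext fun p => blockShift_apply_of_forall_ne τ (hmeet p)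
      rwa [hfix]
  refine ⟨fun h => ?_, preserves σ v⟩
  simpa [comp_def, blockShift_symm_apply hinj] using preserves σ.symm _ h

end Blocks

theorem isCellularPartition_of_blocks {M L : Type*} {arity : L → ℕ}
    {rel : (r : L) → Set (Fin (arity r) → M)} {K : Set M} {n : ℕ} {k : Fin n → ℕ}
    {c : (i : Fin n) → ℕ → Fin (k i) → M} (hK : K.Finite)
    (hcover : ∀ x : M, x ∈ K ∨ ∃ i j ℓ, c i j ℓ = x) (hnotK : ∀ i j ℓ, c i j ℓ ∉ K)
    (hdisj : ∀ (i : Fin n) (j : ℕ) (ℓ : Fin (k i)) (i' : Fin n) (j' : ℕ) (ℓ' : Fin (k i')),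
      c i j ℓ = c i' j' ℓ' → i = i' ∧ j = j' ∧ (ℓ : ℕ) = (ℓ' : ℕ))
    (hclosed : ∀ i r v, v ∈ rel r → ∀ p j ℓ, v p = c i j ℓ → ∃ w, v = c i j ∘ w)
    (hiso : ∀ i j j' r (w : Fin (arity r) → Fin (k i)),
      c i j ∘ w ∈ rel r ↔ c i j' ∘ w ∈ rel r) :
    IsCellularPartition arity rel K n k c := by
  have hinj : ∀ i j ℓ j' ℓ', c i j ℓ = c i j' ℓ' → j = j' ∧ ℓ = ℓ' := fun i j ℓ j' ℓ' h =>
    let ⟨_, hj, hℓ⟩ := hdisj i j ℓ i j' ℓ' h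
    ⟨hj, Fin.ext hℓ⟩
  have hiff := fun i => blockShift_comp_mem_rel_iff (hinj i) (hclosed i) (hiso i)
  refine ⟨hK, hcover, hnotK, hdisj, fun i j j' => ?_, fun i σ => ?_⟩
  · refine ⟨blockShift c i (Equiv.swap j j'), fun x hx => blockShift_apply_of_forall_ne _ ?_,
      fun ℓ => by rw [blockShift_apply_block (hinj i), Equiv.swap_apply_left],
      fun r v _ => (hiff i _ r v).symm⟩
    rintro j ℓ rfl
    exact hnotK i j ℓ hx
  · exact ⟨blockShift c i σ, blockShift_bijective (hinj i) σ, fun r v => (hiff i σ r v).symm,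
      blockShift_apply_block (hinj i) σ, fun x hx => blockShift_apply_of_forall_ne σ hx⟩

theorem Set.Infinite.exists_injective_nat_range_eq {α : Type*} [Countable α] {s : Set α}
    (hs : s.Infinite) : ∃ f : ℕ → α, Injective f ∧ range f = s := by
  have := hs.to_subtype
  obtain ⟨d⟩ := nonempty_denumerable s
  refine ⟨Subtype.val ∘ d.eqv.symm, Subtype.val_injective.comp d.eqv.symm.injective, ?_⟩
  rw [range_comp, d.eqv.symm.range_eq_univ, image_univ, Subtype.range_coe]

theorem Set.Finite.exists_fin_enum_of_ncard_le {α : Type*} {s : Set α} {B : ℕ} (hs : s.Finite)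
    (hB : s.ncard ≤ B) : ∃ m ≤ B, ∃ e : Fin m → α, Injective e ∧ range e = s := by
  obtain ⟨m, e, he, rfl⟩ := hs.fin_param
  refine ⟨m, ?_, e, he, rfl⟩
  rwa [← Nat.card_coe_set_eq, Nat.card_range_of_injective he, Nat.card_eq_fintype_card,
    Fintype.card_fin] at hB

theorem Set.Finite.setOf_finite_fiber {α β : Type*} {f : α → β} (hf : (range f).Finite) :
    {a | (f ⁻¹' {f a}).Finite}.Finite :=
  (Finite.preimage' (hf.inter_of_left {b | (f ⁻¹' {b}).Finite}) fun _ hb => hb.2).subset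
    fun a ha => ⟨mem_range_self a, ha⟩

theorem exists_enum_infinite_fibers {ι τ : Type*} [Countable ι] {f : ι → τ}
    (hf : (range f).Finite) :
    ∃ (n : ℕ) (T : Fin n → τ) (en : Fin n → ℕ → ι), Injective T ∧ (∀ i, Injective (en i)) ∧
      (∀ i j, f (en i j) = T i) ∧ ∀ q, (f ⁻¹' {f q}).Infinite → ∃ i j, en i j = q := by
  have hfin : {t | (f ⁻¹' {t}).Infinite}.Finite :=
    hf.subset fun t ht => by obtain ⟨q, rfl⟩ := ht.nonempty; exact mem_range_self q
  obtain ⟨n, T, hT, hTrange⟩ := hfin.fin_param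
  have hTinf : ∀ i, (f ⁻¹' {T i}).Infinite := fun i => by
    have : T i ∈ range T := mem_range_self i
    rwa [hTrange] at this
  choose en hen hrange using fun i => (hTinf i).exists_injective_nat_range_eq
  refine ⟨n, T, en, hT, hen, fun i j => ?_, fun q hq => ?_⟩
  · have : en i j ∈ range (en i) := mem_range_self j
    rwa [hrange] at this
  · obtain ⟨i, hi⟩ : f q ∈ range T := hTrange ▸ hq
    have : q ∈ f ⁻¹' {T i} := hi.symm
    rw [← hrange] at this
    exact ⟨i, this⟩

section QFType

variable {M L : Type*} {arity : L → ℕ} (rel : (r : L) → Set (Fin (arity r) → M))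

def qfType {m : ℕ} (e : Fin m → M) : Σ m : ℕ, (r : L) → Set (Fin (arity r) → Fin m) :=
  ⟨m, fun r => {w | e ∘ w ∈ rel r}⟩

variable {rel}

theorem comp_cast_mem_rel_iff_of_qfType_eq {m : ℕ} {e : Fin m → M}
    {t : Σ m : ℕ, (r : L) → Set (Fin (arity r) → Fin m)} (h : qfType rel e = t) (r : L)
    (w : Fin (arity r) → Fin t.1) :
    e ∘ Fin.cast (congrArg Sigma.fst h).symm ∘ w ∈ rel r ↔ w ∈ t.2 r := by
  subst h
  rfl

theorem finite_range_qfType [Finite L] {ι : Type*} {B : ℕ} {sz : ι → ℕ} (hsz : ∀ q, sz q ≤ B)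
    (e : (q : ι) → Fin (sz q) → M) : (range fun q => qfType rel (e q)).Finite := by
  refine (finite_range fun t : Σ m : Fin (B + 1), (r : L) → Set (Fin (arity r) → Fin m) =>
    (⟨t.1, t.2⟩ : Σ m : ℕ, (r : L) → Set (Fin (arity r) → Fin m))).subset ?_
  rintro _ ⟨q, rfl⟩
  exact ⟨⟨⟨sz q, Nat.lt_succ_of_le (hsz q)⟩, (qfType rel (e q)).2⟩, rfl⟩

end QFType

theorem exists_isCellularPartition_of_bounded_fibers {M L ι : Type*} [Countable ι] [Finite L]
    {arity : L → ℕ} {rel : (r : L) → Set (Fin (arity r) → M)} (cls : M → ι) (B : ℕ)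
    (hfib : ∀ q, (cls ⁻¹' {q}).Finite ∧ (cls ⁻¹' {q}).ncard ≤ B)
    (hrel : ∀ r v, v ∈ rel r → ∀ p p', cls (v p) = cls (v p')) :
    ∃ K n k c, IsCellularPartition arity rel K n k c := by
  choose sz hsz e he hrange using fun q => (hfib q).1.exists_fin_enum_of_ncard_le (hfib q).2
  let tp q := qfType rel (e q)
  have htp : (range tp).Finite := finite_range_qfType hsz e
  obtain ⟨n, T, en, hT, hen, htype, hcover⟩ := exists_enum_infinite_fibers htp
  let c i j : Fin (T i).1 → M := e (en i j) ∘ Fin.cast (congrArg Sigma.fst (htype i j)).symm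
  have cls_c : ∀ i j ℓ, cls (c i j ℓ) = en i j := fun i j ℓ =>
    (hrange (en i j)).subset (mem_range_self _)
  have mem_block : ∀ i j x, cls x = en i j → ∃ ℓ, x = c i j ℓ := by
    intro i j x hx
    obtain ⟨ℓ, rfl⟩ : x ∈ range (e (en i j)) := (hrange _).symm ▸ hx
    exact ⟨Fin.cast (congrArg Sigma.fst (htype i j)) ℓ, rfl⟩
  let K := cls ⁻¹' {q | (tp ⁻¹' {tp q}).Finite}
  have hK : K.Finite := (Finite.setOf_finite_fiber htp).preimage' fun q _ => (hfib q).1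
  refine ⟨K, n, fun i => (T i).1, c, isCellularPartition_of_blocks hK ?_ ?_ ?_ ?_ ?_⟩
  · refine fun x => or_iff_not_imp_left.mpr fun hx => ?_
    obtain ⟨i, j, hij⟩ := hcover _ hx
    obtain ⟨ℓ, hℓ⟩ := mem_block i j x hij.symm
    exact ⟨i, j, ℓ, hℓ.symm⟩
  · intro i j ℓ hcK
    have hfin : (tp ⁻¹' {T i}).Finite := by
      simpa only [K, mem_preimage, mem_ofPred_eq, cls_c, tp, htype] using hcK
    refine (infinite_range_of_injective (hen i)) (hfin.subset ?_)
    rintro _ ⟨j, rfl⟩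
    exact htype i j
  · intro i j ℓ i' j' ℓ' h
    have hcls : en i j = en i' j' := by rw [← cls_c i j ℓ, ← cls_c i' j' ℓ', h]
    obtain rfl : i = i' := hT (by rw [← htype i j, ← htype i' j', hcls])
    obtain rfl : j = j' := hen i hcls
    exact ⟨rfl, rfl, congrArg Fin.val ((Fin.cast_injective _).eq_iff.mp (he _ h))⟩
  · intro i r v hv p j ℓ hp
    have hcomp : ∀ p', cls (v p') = en i j := fun p' => by rw [hrel r v hv p' p, hp, cls_c]
    choose w hw using fun p' => mem_block i j (v p') (hcomp p')
    exact ⟨w, funext hw⟩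
  · exact fun i j j' r w => (comp_cast_mem_rel_iff_of_qfType_eq (htype i j) r w).trans
      (comp_cast_mem_rel_iff_of_qfType_eq (htype i j') r w).symm

section Mate

variable {M L : Type*} (arity : L → ℕ) (rel : (r : L) → Set (Fin (arity r) → M))

instance : Std.Symm (Mate arity rel) := ⟨fun _ _ ⟨r, d, hd, ha, hb⟩ => ⟨r, d, hd, hb, ha⟩⟩

def mateSetoid : Setoid M where
  r := Relation.ReflTransGen (Mate arity rel)
  iseqv := ⟨fun _ => .refl, fun h => Std.Symm.symm _ _ h, .trans⟩

theorem preimage_mk_mateSetoid (a : M) :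
    Quotient.mk (mateSetoid arity rel) ⁻¹' {Quotient.mk _ a} =
      {b | Relation.ReflTransGen (Mate arity rel) a b} :=
  ext fun _ => Quotient.eq.trans ⟨Std.Symm.symm _ _, Std.Symm.symm _ _⟩

theorem mk_mateSetoid_eq_of_mem_rel {r : L} {v : Fin (arity r) → M} (hv : v ∈ rel r)
    (p p' : Fin (arity r)) :
    Quotient.mk (mateSetoid arity rel) (v p) = Quotient.mk _ (v p') :=
  Quotient.sound (.single ⟨r, v, hv, ⟨p, rfl⟩, ⟨p', rfl⟩⟩)

end Mate

theorem stmt_12_general {M L : Type*} [Countable M] [Finite L]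
    (arity : L → ℕ) (rel : (r : L) → Set (Fin (arity r) → M))
    (B : ℕ)
    (hB : ∀ a : M, {b | Relation.ReflTransGen (Mate arity rel) a b}.Finite ∧
      {b | Relation.ReflTransGen (Mate arity rel) a b}.ncard ≤ B) :
    ∃ (K : Set M) (n : ℕ) (k : Fin n → ℕ) (c : (i : Fin n) → ℕ → (Fin (k i) → M)),
      IsCellularPartition arity rel K n k c :=
  exists_isCellularPartition_of_bounded_fibers (Quotient.mk (mateSetoid arity rel)) B
    (Quotient.ind fun a => preimage_mk_mateSetoid arity rel a ▸ hB a)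
    fun _ _ hv => mk_mateSetoid_eq_of_mem_rel arity rel hv

/-- If `M` is a countable structure in a finite relational language all of whose atomic
relations are mutually algebraic (`M` is finitely MA-presented), and there is a uniform
finite bound `B` on the size of all MA-connected components (classes of the
reflexive-transitive closure of the mate relation), then `M` is cellular. -/
theorem stmt_12 {M L : Type*} [Countable M] [Finite L]
    (arity : L → ℕ) (rel : (r : L) → Set (Fin (arity r) → M))
    (hMA : ∀ r : L, ∃ K : ℕ, MutAlg (rel r) K)
    (B : ℕ)
    (hB : ∀ a : M, {b | Relation.ReflTransGen (Mate arity rel) a b}.Finite ∧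
      {b | Relation.ReflTransGen (Mate arity rel) a b}.ncard ≤ B) :
    ∃ (K : Set M) (n : ℕ) (k : Fin n → ℕ) (c : (i : Fin n) → ℕ → (Fin (k i) → M)),
      IsCellularPartition arity rel K n k c :=
  stmt_12_general arity rel B hB
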